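/- arXiv:2204.10163 — 8 statements merged into one kernel-verified Lean document; each statement's English description precedes it below -/
import Mathlib

section
/- Let Ω ⊆ ℝ² be open with coordinates (x,u) and let F : Ω → ℝ be three times continuously differentiable. Assume that ∂_x∂_u F is nowhere zero on Ω and that ∂_x(∂_u∂_u F − (∂_u F)²) = 0 on Ω (i.e. ∂_u∂_u F − (∂_u F)² depends only on u). Then ∂_u(∂_x∂_u F) = 2 (∂_u F)(∂_x∂_u F) on Ω; equivalently, the function 2F − ln|∂_x∂_u F| has vanishing partial derivative in the direction of u on Ω. -/
/-! The Riccati equation `∂_u∂_u F − (∂_u F)² = −a(u)` differentiated in `x` gives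
`∂_x∂_u∂_u F = 2 (∂_u F)(∂_x∂_u F)`; since `F` is `C³`, the mixed partials of `∂_u F` commute,
so this is `∂_u(∂_x∂_u F) = 2 (∂_u F)(∂_x∂_u F)`. Dividing by `∂_x∂_u F ≠ 0` says exactly that
`∂_u (2F − ln|∂_x∂_u F|) = 0`. -/

/-- Partial derivative in the `x`-direction (first coordinate). -/
noncomputable def pdX (f : ℝ × ℝ → ℝ) (p : ℝ × ℝ) : ℝ := fderiv ℝ f p (1, 0)

/-- Partial derivative in the `u`-direction (second coordinate). -/
noncomputable def pdU (f : ℝ × ℝ → ℝ) (p : ℝ × ℝ) : ℝ := fderiv ℝ f p (0, 1)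

theorem ContDiffAt.fderiv_fderiv_apply_comm {E G : Type*} [NormedAddCommGroup E]
    [NormedSpace ℝ E] [NormedAddCommGroup G] [NormedSpace ℝ G] {f : E → G} {x : E}
    (hf : ContDiffAt ℝ 2 f x) (v w : E) :
    fderiv ℝ (fun y => fderiv ℝ f y v) x w = fderiv ℝ (fun y => fderiv ℝ f y w) x v := by
  have hdf : DifferentiableAt ℝ (fderiv ℝ f) x :=
    (hf.fderiv_right (m := 1) le_rfl).differentiableAt one_ne_zero
  simp only [fderiv_clm_apply hdf (differentiableAt_const _), fderiv_const_apply,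
    ContinuousLinearMap.comp_zero, zero_add, ContinuousLinearMap.flip_apply]
  exact (hf.isSymmSndFDerivAt (by simp)).eq w v

theorem pdU_pdX_comm {g : ℝ × ℝ → ℝ} {p : ℝ × ℝ} (hg : ContDiffAt ℝ 2 g p) :
    pdU (pdX g) p = pdX (pdU g) p :=
  hg.fderiv_fderiv_apply_comm (1, 0) (0, 1)

theorem ContDiffOn.pdX {n : WithTop ℕ∞} {f : ℝ × ℝ → ℝ} {Ω : Set (ℝ × ℝ)}
    (hf : ContDiffOn ℝ (n + 1) f Ω) (hΩ : IsOpen Ω) : ContDiffOn ℝ n (pdX f) Ω :=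
  (hf.fderiv_of_isOpen hΩ le_rfl).clm_apply contDiffOn_const

theorem ContDiffOn.pdU {n : WithTop ℕ∞} {f : ℝ × ℝ → ℝ} {Ω : Set (ℝ × ℝ)}
    (hf : ContDiffOn ℝ (n + 1) f Ω) (hΩ : IsOpen Ω) : ContDiffOn ℝ n (pdU f) Ω :=
  (hf.fderiv_of_isOpen hΩ le_rfl).clm_apply contDiffOn_const

theorem pdX_sub_sq {g h : ℝ × ℝ → ℝ} {p : ℝ × ℝ} (hg : DifferentiableAt ℝ g p)
    (hh : DifferentiableAt ℝ h p) :
    pdX (fun q => g q - h q ^ 2) p = pdX g p - 2 * h p * pdX h p := by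
  rw [pdX, fderiv_fun_sub hg (hh.fun_pow 2), fderiv_fun_pow 2 hh]
  simp [pdX]

theorem pdU_two_mul_sub_log_abs {F h : ℝ × ℝ → ℝ} {p : ℝ × ℝ} (hF : DifferentiableAt ℝ F p)
    (hh : DifferentiableAt ℝ h p) (hp : h p ≠ 0) :
    pdU (fun q => 2 * F q - Real.log |h q|) p = 2 * pdU F p - pdU h p / h p := by
  simp only [pdU, Real.log_abs]
  rw [fderiv_fun_sub (hF.const_mul 2) (hh.log hp), fderiv_const_mul hF, fderiv.log hh hp]
  simp only [sub_apply, smul_apply, smul_eq_mul]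
  ring

/-- If `F` is `C³` on an open set `Ω`, with `∂_x∂_u F` nowhere zero and
`∂_x(∂_u∂_u F − (∂_u F)²) = 0` on `Ω`, then `∂_u(∂_x∂_u F) = 2 (∂_u F)(∂_x∂_u F)` on `Ω`;
equivalently, `2F − ln|∂_x∂_u F|` has vanishing `u`-partial derivative on `Ω`. -/
theorem stmt_2 (Ω : Set (ℝ × ℝ)) (hΩ : IsOpen Ω) (F : ℝ × ℝ → ℝ)
    (hF : ContDiffOn ℝ 3 F Ω)
    (hFxu : ∀ p ∈ Ω, pdX (pdU F) p ≠ 0)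
    (hRic : ∀ p ∈ Ω, pdX (fun q => pdU (pdU F) q - (pdU F q) ^ 2) p = 0) :
    ∀ p ∈ Ω, pdU (pdX (pdU F)) p = 2 * pdU F p * pdX (pdU F) p ∧
      pdU (fun q => 2 * F q - Real.log |pdX (pdU F) q|) p = 0 := by
  intro p hp
  have hnhds := hΩ.mem_nhds hp
  have hg : ContDiffOn ℝ 2 (pdU F) Ω := hF.pdU hΩ
  have hgx : DifferentiableAt ℝ (pdX (pdU F)) p :=
    ((hg.pdX hΩ).contDiffAt hnhds).differentiableAt one_ne_zero
  have hguu : DifferentiableAt ℝ (pdU (pdU F)) p :=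
    ((hg.pdU hΩ).contDiffAt hnhds).differentiableAt one_ne_zero
  have hmixed : pdU (pdX (pdU F)) p = 2 * pdU F p * pdX (pdU F) p := by
    have hric := hRic p hp
    rw [pdX_sub_sq hguu ((hg.contDiffAt hnhds).differentiableAt two_ne_zero)] at hric
    rw [pdU_pdX_comm (hg.contDiffAt hnhds)]
    linarith
  refine ⟨hmixed, ?_⟩
  rw [pdU_two_mul_sub_log_abs ((hF.contDiffAt hnhds).differentiableAt (by norm_num)) hgx
    (hFxu p hp), hmixed, mul_div_cancel_right₀ _ (hFxu p hp), sub_self]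
end

section
/- For a real function φ that is four times differentiable at t, define I[φ](t) = (φ'(t)²·φ⁽⁴⁾(t) − 4·φ'(t)·φ''(t)·φ'''(t) + 3·φ''(t)³)² / (2·φ'(t)·φ'''(t) − 3·φ''(t)²)³. Let A, B, a, b, c, d ∈ ℝ with B ≠ 0 and ad − bc = 1, let t₀ ∈ ℝ and set t₁ = A + B·t₀. Let ψ : ℝ → ℝ be four times continuously differentiable on an open neighborhood of t₁ with c·ψ + d nonvanishing on that neighborhood, and assume 2·ψ'(t₁)·ψ'''(t₁) − 3·ψ''(t₁)² ≠ 0. Define ψ₂(t) = sgn(B)·(a·ψ(A + B t) + b)/(c·ψ(A + B t) + d), where sgn(B) = B/|B|. Then 2·ψ₂'(t₀)·ψ₂'''(t₀) − 3·ψ₂''(t₀)² ≠ 0 and I[ψ₂](t₀) = I[ψ](t₁). -/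
/-!
Write `ψ₂ = ε · (M ∘ ψ ∘ L)` with `ε = B / |B|`, `L t = A + B t` and `M y = (a y + b) / (c y + d)`.
Each of the three operations multiplies the denominator `D = 2φ'φ''' - 3φ''²` of `I` by `r²` and
its numerator `N = φ'²φ⁽⁴⁾ - 4φ'φ''φ''' + 3φ''³` by `r³`, with `r = ε`, `B²` and `(cψ + d)⁻²`
respectively, so `I = N² / D³` is unchanged and `D ≠ 0` is preserved. For the Möbius map, the
derivatives of `g = M ∘ ψ` come from the Leibniz rule applied to `g · (cψ + d) = aψ + b`, which
`(a - c g)(cψ + d) = ad - bc = 1` turns into a recursion for `g⁽ᵏ⁾`.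
-/

/-- The first generating differential invariant
`I[φ] = (φ'²φ⁽⁴⁾ - 4φ'φ''φ''' + 3φ''³)² / (2φ'φ''' - 3φ''²)³`. -/
noncomputable def invI (φ : ℝ → ℝ) (t : ℝ) : ℝ :=
  ((deriv φ t) ^ 2 * iteratedDeriv 4 φ t
      - 4 * deriv φ t * iteratedDeriv 2 φ t * iteratedDeriv 3 φ t
      + 3 * (iteratedDeriv 2 φ t) ^ 3) ^ 2 /
    (2 * deriv φ t * iteratedDeriv 3 φ t - 3 * (iteratedDeriv 2 φ t) ^ 2) ^ 3

open Filter Finset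

noncomputable def invINum (φ : ℝ → ℝ) (t : ℝ) : ℝ :=
  deriv φ t ^ 2 * iteratedDeriv 4 φ t
    - 4 * deriv φ t * iteratedDeriv 2 φ t * iteratedDeriv 3 φ t + 3 * iteratedDeriv 2 φ t ^ 3

noncomputable def invIDen (φ : ℝ → ℝ) (t : ℝ) : ℝ :=
  2 * deriv φ t * iteratedDeriv 3 φ t - 3 * iteratedDeriv 2 φ t ^ 2

theorem invI_eq_invINum_div_invIDen (φ : ℝ → ℝ) (t : ℝ) :
    invI φ t = invINum φ t ^ 2 / invIDen φ t ^ 3 := rfl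

theorem invI_eq_of_rescaling {f g : ℝ → ℝ} {s t r : ℝ} (hr : r ≠ 0)
    (hN : invINum g s = r ^ 3 * invINum f t) (hD : invIDen g s = r ^ 2 * invIDen f t) :
    invI g s = invI f t := by
  rw [invI_eq_invINum_div_invIDen, invI_eq_invINum_div_invIDen, hN, hD, mul_pow, mul_pow,
    ← pow_mul, ← pow_mul, mul_div_mul_left _ _ (pow_ne_zero _ hr)]

theorem invINum_const_mul (ε : ℝ) (f : ℝ → ℝ) (t : ℝ) :
    invINum (fun x => ε * f x) t = ε ^ 3 * invINum f t := by
  simp only [invINum, ← iteratedDeriv_one, iteratedDeriv_const_mul_field]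
  ring

theorem invIDen_const_mul (ε : ℝ) (f : ℝ → ℝ) (t : ℝ) :
    invIDen (fun x => ε * f x) t = ε ^ 2 * invIDen f t := by
  simp only [invIDen, ← iteratedDeriv_one, iteratedDeriv_const_mul_field]
  ring

theorem iteratedDeriv_comp_const_add_mul (f : ℝ → ℝ) (A B : ℝ) (k : ℕ) :
    iteratedDeriv k (fun t => f (A + B * t)) = fun t => B ^ k * iteratedDeriv k f (A + B * t) := by
  induction k with
  | zero => simp
  | succ k ih =>
    ext t
    rw [iteratedDeriv_succ, ih, deriv_const_mul_field,
      deriv_comp_mul_left B (fun s => iteratedDeriv k f (A + s)), deriv_comp_const_add,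
      iteratedDeriv_succ, smul_eq_mul, pow_succ]
    ring

theorem invINum_comp_const_add_mul (f : ℝ → ℝ) (A B t : ℝ) :
    invINum (fun x => f (A + B * x)) t = (B ^ 2) ^ 3 * invINum f (A + B * t) := by
  simp only [invINum, ← iteratedDeriv_one, iteratedDeriv_comp_const_add_mul]
  ring

theorem invIDen_comp_const_add_mul (f : ℝ → ℝ) (A B t : ℝ) :
    invIDen (fun x => f (A + B * x)) t = (B ^ 2) ^ 2 * invIDen f (A + B * t) := by
  simp only [invIDen, ← iteratedDeriv_one, iteratedDeriv_comp_const_add_mul]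
  ring

theorem iteratedDeriv_mul_add_const {k : ℕ} (hk : 0 < k) (f : ℝ → ℝ) (a b t : ℝ) :
    iteratedDeriv k (fun x => a * f x + b) t = a * iteratedDeriv k f t := by
  simp_rw [add_comm _ b]
  rw [iteratedDeriv_const_add hk, iteratedDeriv_const_mul_field]

section Moebius

variable {f : ℝ → ℝ} {t a b c d : ℝ}

theorem sum_choose_mul_iteratedDeriv_moebius {n : ℕ} (hf : ContDiffAt ℝ n f t)
    (hQ : c * f t + d ≠ 0) :
    ∑ i ∈ range (n + 1),
        n.choose i * iteratedDeriv i (fun x => (a * f x + b) / (c * f x + d)) t *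
          iteratedDeriv (n - i) (fun x => c * f x + d) t =
      iteratedDeriv n (fun x => a * f x + b) t := by
  have hQf : ContDiffAt ℝ n (fun x => c * f x + d) t :=
    (contDiffAt_const.mul hf).add contDiffAt_const
  have hPf : ContDiffAt ℝ n (fun x => a * f x + b) t :=
    (contDiffAt_const.mul hf).add contDiffAt_const
  rw [← iteratedDeriv_fun_mul (f := fun x => (a * f x + b) / (c * f x + d)) (hPf.div hQf hQ) hQf]
  refine EventuallyEq.iteratedDeriv_eq n ?_
  filter_upwards [hQf.continuousAt.eventually_ne hQ] with x hx
  exact div_mul_cancel₀ _ hx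

theorem sub_mul_moebius_mul_eq_one (hdet : a * d - b * c = 1) {y : ℝ} (hy : c * y + d ≠ 0) :
    (a - c * ((a * y + b) / (c * y + d))) * (c * y + d) = 1 := by
  field_simp
  linear_combination hdet

variable (hf : ContDiffAt ℝ 4 f t) (hdet : a * d - b * c = 1) (hQ : c * f t + d ≠ 0)
include hf hdet hQ

theorem deriv_moebius :
    deriv (fun x => (a * f x + b) / (c * f x + d)) t = deriv f t / (c * f t + d) ^ 2 := by
  set g := fun x => (a * f x + b) / (c * f x + d)
  have hw : (a - c * g t) * (c * f t + d) = 1 := sub_mul_moebius_mul_eq_one hdet hQ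
  have h : g t * (c * deriv f t) + deriv g t * (c * f t + d) = a * deriv f t := by
    simpa [sum_range_succ, iteratedDeriv_mul_add_const] using
      sum_choose_mul_iteratedDeriv_moebius (n := 1) (a := a) (b := b) (hf.of_le (by norm_num)) hQ
  rw [eq_div_iff (pow_ne_zero _ hQ)]
  linear_combination (c * f t + d) * h + deriv f t * hw

theorem iteratedDeriv_two_moebius :
    iteratedDeriv 2 (fun x => (a * f x + b) / (c * f x + d)) t =
      (iteratedDeriv 2 f t * (c * f t + d) - 2 * c * deriv f t ^ 2) / (c * f t + d) ^ 3 := by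
  have h1 := (eq_div_iff (pow_ne_zero _ hQ)).mp (deriv_moebius hf hdet hQ)
  set g := fun x => (a * f x + b) / (c * f x + d)
  have hw : (a - c * g t) * (c * f t + d) = 1 := sub_mul_moebius_mul_eq_one hdet hQ
  have h : g t * (c * iteratedDeriv 2 f t) + 2 * deriv g t * (c * deriv f t)
      + iteratedDeriv 2 g t * (c * f t + d) = a * iteratedDeriv 2 f t := by
    simpa [sum_range_succ, iteratedDeriv_mul_add_const] using
      sum_choose_mul_iteratedDeriv_moebius (n := 2) (a := a) (b := b) (hf.of_le (by norm_num)) hQ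
  rw [eq_div_iff (pow_ne_zero _ hQ)]
  linear_combination (c * f t + d) ^ 2 * h + iteratedDeriv 2 f t * (c * f t + d) * hw
    - 2 * c * deriv f t * h1

theorem iteratedDeriv_three_moebius :
    iteratedDeriv 3 (fun x => (a * f x + b) / (c * f x + d)) t =
      (iteratedDeriv 3 f t * (c * f t + d) ^ 2
        - 6 * c * deriv f t * iteratedDeriv 2 f t * (c * f t + d)
        + 6 * c ^ 2 * deriv f t ^ 3) / (c * f t + d) ^ 4 := by
  have h1 := (eq_div_iff (pow_ne_zero _ hQ)).mp (deriv_moebius hf hdet hQ)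
  have h2 := (eq_div_iff (pow_ne_zero _ hQ)).mp (iteratedDeriv_two_moebius hf hdet hQ)
  set g := fun x => (a * f x + b) / (c * f x + d)
  have hw : (a - c * g t) * (c * f t + d) = 1 := sub_mul_moebius_mul_eq_one hdet hQ
  have h : g t * (c * iteratedDeriv 3 f t) + 3 * deriv g t * (c * iteratedDeriv 2 f t)
      + 3 * iteratedDeriv 2 g t * (c * deriv f t) + iteratedDeriv 3 g t * (c * f t + d)
      = a * iteratedDeriv 3 f t := by
    simpa [sum_range_succ, iteratedDeriv_mul_add_const] using
      sum_choose_mul_iteratedDeriv_moebius (n := 3) (a := a) (b := b) (hf.of_le (by norm_num)) hQ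
  rw [eq_div_iff (pow_ne_zero _ hQ)]
  linear_combination (c * f t + d) ^ 3 * h + iteratedDeriv 3 f t * (c * f t + d) ^ 2 * hw
    - 3 * c * iteratedDeriv 2 f t * (c * f t + d) * h1 - 3 * c * deriv f t * h2

theorem iteratedDeriv_four_moebius :
    iteratedDeriv 4 (fun x => (a * f x + b) / (c * f x + d)) t =
      (iteratedDeriv 4 f t * (c * f t + d) ^ 3
        - 8 * c * deriv f t * iteratedDeriv 3 f t * (c * f t + d) ^ 2
        - 6 * c * iteratedDeriv 2 f t ^ 2 * (c * f t + d) ^ 2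
        + 36 * c ^ 2 * deriv f t ^ 2 * iteratedDeriv 2 f t * (c * f t + d)
        - 24 * c ^ 3 * deriv f t ^ 4) / (c * f t + d) ^ 5 := by
  have h1 := (eq_div_iff (pow_ne_zero _ hQ)).mp (deriv_moebius hf hdet hQ)
  have h2 := (eq_div_iff (pow_ne_zero _ hQ)).mp (iteratedDeriv_two_moebius hf hdet hQ)
  have h3 := (eq_div_iff (pow_ne_zero _ hQ)).mp (iteratedDeriv_three_moebius hf hdet hQ)
  set g := fun x => (a * f x + b) / (c * f x + d)
  have hw : (a - c * g t) * (c * f t + d) = 1 := sub_mul_moebius_mul_eq_one hdet hQ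
  have h : g t * (c * iteratedDeriv 4 f t) + 4 * deriv g t * (c * iteratedDeriv 3 f t)
      + 6 * iteratedDeriv 2 g t * (c * iteratedDeriv 2 f t)
      + 4 * iteratedDeriv 3 g t * (c * deriv f t) + iteratedDeriv 4 g t * (c * f t + d)
      = a * iteratedDeriv 4 f t := by
    simpa [sum_range_succ, Nat.choose, iteratedDeriv_mul_add_const] using
      sum_choose_mul_iteratedDeriv_moebius (n := 4) (a := a) (b := b) hf hQ
  rw [eq_div_iff (pow_ne_zero _ hQ)]
  linear_combination (c * f t + d) ^ 4 * h + iteratedDeriv 4 f t * (c * f t + d) ^ 3 * hw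
    - 4 * c * iteratedDeriv 3 f t * (c * f t + d) ^ 2 * h1
    - 6 * c * iteratedDeriv 2 f t * (c * f t + d) * h2 - 4 * c * deriv f t * h3

theorem invINum_moebius :
    invINum (fun x => (a * f x + b) / (c * f x + d)) t =
      ((c * f t + d) ^ 2)⁻¹ ^ 3 * invINum f t := by
  rw [invINum, invINum, deriv_moebius hf hdet hQ, iteratedDeriv_two_moebius hf hdet hQ,
    iteratedDeriv_three_moebius hf hdet hQ, iteratedDeriv_four_moebius hf hdet hQ]
  field_simp
  ring

theorem invIDen_moebius :
    invIDen (fun x => (a * f x + b) / (c * f x + d)) t =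
      ((c * f t + d) ^ 2)⁻¹ ^ 2 * invIDen f t := by
  rw [invIDen, invIDen, deriv_moebius hf hdet hQ, iteratedDeriv_two_moebius hf hdet hQ,
    iteratedDeriv_three_moebius hf hdet hQ]
  field_simp
  ring

end Moebius

/-- Invariance of `I` under the action `ψ₂(t) = sgn(B)·(aψ(A+Bt)+b)/(cψ(A+Bt)+d)`
of `SAff₁(ℝ) × PSL₂(ℝ) × ℤ₂`. -/
theorem stmt_6 (A B a b c d : ℝ) (hB : B ≠ 0) (hdet : a * d - b * c = 1)
    (t₀ t₁ : ℝ) (ht₁ : t₁ = A + B * t₀)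
    (ψ : ℝ → ℝ) (U : Set ℝ) (hU : IsOpen U) (ht₁U : t₁ ∈ U)
    (hψ : ContDiffOn ℝ 4 ψ U) (hcd : ∀ x ∈ U, c * ψ x + d ≠ 0)
    (hnd : 2 * deriv ψ t₁ * iteratedDeriv 3 ψ t₁ - 3 * (iteratedDeriv 2 ψ t₁) ^ 2 ≠ 0)
    (ψ₂ : ℝ → ℝ)
    (hψ₂ : ∀ t, ψ₂ t = (B / |B|) * ((a * ψ (A + B * t) + b) / (c * ψ (A + B * t) + d))) :
    2 * deriv ψ₂ t₀ * iteratedDeriv 3 ψ₂ t₀ - 3 * (iteratedDeriv 2 ψ₂ t₀) ^ 2 ≠ 0 ∧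
      invI ψ₂ t₀ = invI ψ t₁ := by
  have hψt₁ : ContDiffAt ℝ 4 ψ t₁ := hψ.contDiffAt (hU.mem_nhds ht₁U)
  have hQ : c * ψ t₁ + d ≠ 0 := hcd t₁ ht₁U
  set g : ℝ → ℝ := fun y => (a * ψ y + b) / (c * ψ y + d)
  have hψ₂' : ψ₂ = fun t => B / |B| * g (A + B * t) := funext hψ₂
  set r := B / |B| * B ^ 2 * ((c * ψ t₁ + d) ^ 2)⁻¹
  have hr : r ≠ 0 := by positivity
  have hN : invINum ψ₂ t₀ = r ^ 3 * invINum ψ t₁ := by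
    rw [hψ₂', invINum_const_mul, invINum_comp_const_add_mul g, ← ht₁, invINum_moebius hψt₁ hdet hQ]
    ring
  have hD : invIDen ψ₂ t₀ = r ^ 2 * invIDen ψ t₁ := by
    rw [hψ₂', invIDen_const_mul, invIDen_comp_const_add_mul g, ← ht₁, invIDen_moebius hψt₁ hdet hQ]
    ring
  refine ⟨?_, invI_eq_of_rescaling hr hN hD⟩
  change invIDen ψ₂ t₀ ≠ 0
  rw [hD]
  exact mul_ne_zero (pow_ne_zero _ hr) hnd
end

section
/- For twice differentiable functions a, c : ℝ → ℝ define, at a point w with a'(w) ≠ 0: I[a,c](w) = (a(w)·c'(w) − c(w)·a'(w))·a(w)⁴/a'(w)⁴, J[a](w) = a(w)·a''(w)/a'(w)², and K[a,c](w) = (a(w)·c''(w) − c(w)·a''(w))·a(w)⁵/a'(w)⁵. Let A₁, A₂ ∈ ℝ and A₃, A₄ ∈ ℝ∖{0}, and define ã(u) = a(w)/(A₃·A₄²) and c̃(u) = c(w)/(A₃²·A₄) − A₂·a(w)/(A₃·A₄²), where w = (u − A₁)/(A₃·A₄). Then at every u for which a'(w) ≠ 0: ã'(u) ≠ 0, I[ã,c̃](u)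 = I[a,c](w), J[ã](u) = J[a](w), and K[ã,c̃](u) = K[a,c](w). -/
/-!
The action factors into the affine reparametrization `w = (u - A₁) / s`, `s = A₃A₄`, and the
linear change `(a, c) ↦ (α a, β c + γ a)` with `α = 1/(A₃A₄²)`, `β = 1/(A₃²A₄)`, `γ = -A₂ α`.
The reparametrization multiplies `I` and `K` by `s³` and the linear change multiplies them by `αβ`;
these factors cancel since `s³ α β = 1`. `J` is invariant under each step separately.
-/

/-- `I[a,c](w) = (a·c' − c·a')·a⁴/a'⁴`. -/
noncomputable def invI8 (a c : ℝ → ℝ) (w : ℝ) : ℝ :=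
  (a w * deriv c w - c w * deriv a w) * (a w) ^ 4 / (deriv a w) ^ 4

/-- `J[a](w) = a·a''/a'²`. -/
noncomputable def invJ8 (a : ℝ → ℝ) (w : ℝ) : ℝ :=
  a w * deriv (deriv a) w / (deriv a w) ^ 2

/-- `K[a,c](w) = (a·c'' − c·a'')·a⁵/a'⁵`. -/
noncomputable def invK8 (a c : ℝ → ℝ) (w : ℝ) : ℝ :=
  (a w * deriv (deriv c) w - c w * deriv (deriv a) w) * (a w) ^ 5 / (deriv a w) ^ 5

section Reparametrization

variable (a c f : ℝ → ℝ) (A₁ s u : ℝ)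

theorem deriv_comp_sub_div :
    deriv (fun u => f ((u - A₁) / s)) u = deriv f ((u - A₁) / s) / s := by
  simp_rw [div_eq_inv_mul (_ - A₁) s]
  rw [deriv_comp_sub_const (f := fun v => f (s⁻¹ * v)), deriv_comp_mul_left, smul_eq_mul,
    div_eq_inv_mul]

theorem deriv_deriv_comp_sub_div :
    deriv (deriv fun u => f ((u - A₁) / s)) u = deriv (deriv f) ((u - A₁) / s) / s ^ 2 := by
  rw [funext (deriv_comp_sub_div f A₁ s), deriv_div_const, deriv_comp_sub_div, div_div, sq]

theorem invI8_comp_sub_div (hs : s ≠ 0) :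
    invI8 (fun u => a ((u - A₁) / s)) (fun u => c ((u - A₁) / s)) u =
      s ^ 3 * invI8 a c ((u - A₁) / s) := by
  simp only [invI8, deriv_comp_sub_div]
  field_simp

theorem invJ8_comp_sub_div (hs : s ≠ 0) :
    invJ8 (fun u => a ((u - A₁) / s)) u = invJ8 a ((u - A₁) / s) := by
  simp only [invJ8, deriv_comp_sub_div, deriv_deriv_comp_sub_div]
  field_simp

theorem invK8_comp_sub_div (hs : s ≠ 0) :
    invK8 (fun u => a ((u - A₁) / s)) (fun u => c ((u - A₁) / s)) u =
      s ^ 3 * invK8 a c ((u - A₁) / s) := by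
  simp only [invK8, deriv_comp_sub_div, deriv_deriv_comp_sub_div]
  field_simp

end Reparametrization

section LinearChange

variable {a c : ℝ → ℝ} {α : ℝ} (β γ : ℝ) {w : ℝ}

theorem deriv_const_mul_add_const_mul (hc : DifferentiableAt ℝ c w)
    (ha : DifferentiableAt ℝ a w) :
    deriv (fun w => β * c w + γ * a w) w = β * deriv c w + γ * deriv a w :=
  ((hc.hasDerivAt.const_mul β).add (ha.hasDerivAt.const_mul γ)).deriv

theorem invI8_const_mul_linear_comb (hα : α ≠ 0) (ha : DifferentiableAt ℝ a w)
    (hc : DifferentiableAt ℝ c w) :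
    invI8 (fun w => α * a w) (fun w => β * c w + γ * a w) w = α * β * invI8 a c w := by
  simp only [invI8, deriv_const_mul_field', deriv_const_mul_add_const_mul β γ hc ha]
  field_simp
  ring

theorem invJ8_const_mul (hα : α ≠ 0) : invJ8 (fun w => α * a w) w = invJ8 a w := by
  simp only [invJ8, deriv_const_mul_field']
  field_simp

theorem invK8_const_mul_linear_comb (hα : α ≠ 0) (ha : Differentiable ℝ a)
    (hc : Differentiable ℝ c) (ha' : DifferentiableAt ℝ (deriv a) w)
    (hc' : DifferentiableAt ℝ (deriv c) w) :
    invK8 (fun w => α * a w) (fun w => β * c w + γ * a w) w = α * β * invK8 a c w := by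
  have hd : deriv (fun w => β * c w + γ * a w) = fun w => β * deriv c w + γ * deriv a w :=
    funext fun w => deriv_const_mul_add_const_mul β γ (hc w) (ha w)
  simp only [invK8, deriv_const_mul_field', hd, deriv_const_mul_add_const_mul β γ hc' ha']
  field_simp
  ring

end LinearChange

/-- Invariance of `I`, `J`, `K` under the group action
`(u, a, c) ↦ (A₃A₄u + A₁, a/(A₃A₄²), c/(A₃²A₄) − A₂a/(A₃A₄²))`. -/
theorem stmt_8 (a c : ℝ → ℝ)
    (ha1 : ∀ w, DifferentiableAt ℝ a w) (ha2 : ∀ w, DifferentiableAt ℝ (deriv a) w)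
    (hc1 : ∀ w, DifferentiableAt ℝ c w) (hc2 : ∀ w, DifferentiableAt ℝ (deriv c) w)
    (A₁ A₂ A₃ A₄ : ℝ) (hA₃ : A₃ ≠ 0) (hA₄ : A₄ ≠ 0)
    (a2 c2 : ℝ → ℝ)
    (ha2' : ∀ u, a2 u = a ((u - A₁) / (A₃ * A₄)) / (A₃ * A₄ ^ 2))
    (hc2' : ∀ u, c2 u = c ((u - A₁) / (A₃ * A₄)) / (A₃ ^ 2 * A₄)
        - A₂ * a ((u - A₁) / (A₃ * A₄)) / (A₃ * A₄ ^ 2)) :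
    ∀ u : ℝ, deriv a ((u - A₁) / (A₃ * A₄)) ≠ 0 →
      deriv a2 u ≠ 0 ∧
      invI8 a2 c2 u = invI8 a c ((u - A₁) / (A₃ * A₄)) ∧
      invJ8 a2 u = invJ8 a ((u - A₁) / (A₃ * A₄)) ∧
      invK8 a2 c2 u = invK8 a c ((u - A₁) / (A₃ * A₄)) := by
  intro u hne
  set s := A₃ * A₄
  set α := (A₃ * A₄ ^ 2)⁻¹
  set β := (A₃ ^ 2 * A₄)⁻¹
  have hs : s ≠ 0 := mul_ne_zero hA₃ hA₄
  have hα : α ≠ 0 := inv_ne_zero (mul_ne_zero hA₃ (pow_ne_zero 2 hA₄))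
  have hscale : s ^ 3 * (α * β) = 1 := by simp only [s, α, β]; field_simp
  set b : ℝ → ℝ := fun w => α * a w with hb
  set d : ℝ → ℝ := fun w => β * c w + -A₂ * α * a w with hd
  obtain rfl : a2 = fun u => b ((u - A₁) / s) := funext fun u => by rw [ha2', hb, div_eq_inv_mul]
  obtain rfl : c2 = fun u => d ((u - A₁) / s) := funext fun u => by rw [hc2', hd]; ring
  refine ⟨?_, ?_, ?_, ?_⟩
  · rw [deriv_comp_sub_div, hb, deriv_const_mul_field']
    exact div_ne_zero (mul_ne_zero hα hne) hs
  · rw [invI8_comp_sub_div b d _ _ _ hs, hb, hd,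
      invI8_const_mul_linear_comb _ _ hα (ha1 _) (hc1 _), ← mul_assoc, hscale, one_mul]
  · rw [invJ8_comp_sub_div b _ _ _ hs, hb, invJ8_const_mul hα]
  · rw [invK8_comp_sub_div b d _ _ _ hs, hb, hd,
      invK8_const_mul_linear_comb _ _ hα ha1 hc1 (ha2 _) (hc2 _), ← mul_assoc, hscale, one_mul]
end

section
/- Let a, c : ℝ → ℝ with a continuously differentiable. Define H : ℝ³ → ℝ on coordinates (v,x,u) by H(v,x,u) = a(u)·v·x + (1/12)·a(u)²·x⁴ − (1/3)·a'(u)·x³ + c(u)·x. Then H satisfies the dispersionless-KP-type equation 2·∂_v∂_u H + ∂_x∂_x H − ∂_v(H·∂_v H) = 0 at every point of ℝ³. -/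
/-! `H` is affine in `v` with `H_v = a x`, so `(H H_v)_v = H_v² = a² x²`, while `H_{vu} = a' x` and
`H_{xx} = a² x² − 2 a' x`; the cubic and quartic terms in `x` are tuned exactly so that these cancel. -/

noncomputable def ewPotential (a a' c : ℝ → ℝ) (v x u : ℝ) : ℝ :=
  a u * v * x + (1 / 12) * (a u) ^ 2 * x ^ 4 - (1 / 3) * a' u * x ^ 3 + c u * x

section

variable (a a' c : ℝ → ℝ)

lemma hasDerivAt_ewPotential_v (v x u : ℝ) :
    HasDerivAt (fun w => ewPotential a a' c w x u) (a u * x) v := by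
  have h := (((((hasDerivAt_id v).const_mul (a u)).mul_const x).add_const
    ((1 / 12) * (a u) ^ 2 * x ^ 4)).sub_const ((1 / 3) * a' u * x ^ 3)).add_const (c u * x)
  exact h.congr_deriv (by ring)

lemma hasDerivAt_ewPotential_x (v x u : ℝ) :
    HasDerivAt (fun s => ewPotential a a' c v s u)
      (a u * v + (a u) ^ 2 * x ^ 3 / 3 - a' u * x ^ 2 + c u) x := by
  have h := ((((hasDerivAt_id x).const_mul (a u * v)).add
    ((hasDerivAt_pow 4 x).const_mul ((1 / 12) * (a u) ^ 2))).sub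
    ((hasDerivAt_pow 3 x).const_mul ((1 / 3) * a' u))).add ((hasDerivAt_id x).const_mul (c u))
  exact h.congr_deriv (by norm_num; ring)

lemma hasDerivAt_ewPotential_xx (v x u : ℝ) :
    HasDerivAt (fun s => a u * v + (a u) ^ 2 * s ^ 3 / 3 - a' u * s ^ 2 + c u)
      ((a u) ^ 2 * x ^ 2 - 2 * a' u * x) x := by
  have h := (((((hasDerivAt_pow 3 x).const_mul ((a u) ^ 2)).div_const 3).const_add
    (a u * v)).sub ((hasDerivAt_pow 2 x).const_mul (a' u))).add_const (c u)
  exact h.congr_deriv (by norm_num; ring)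

end

theorem stmt_11_general (a a' c : ℝ → ℝ) (ha : ∀ u, HasDerivAt a (a' u) u)
    (H : ℝ → ℝ → ℝ → ℝ)
    (hH : ∀ v x u, H v x u =
      a u * v * x + (1 / 12) * (a u) ^ 2 * x ^ 4 - (1 / 3) * a' u * x ^ 3 + c u * x) :
    ∃ Hv Hx Hvu Hxx HHvv : ℝ → ℝ → ℝ → ℝ,
      (∀ v x u, HasDerivAt (fun w => H w x u) (Hv v x u) v) ∧
      (∀ v x u, HasDerivAt (fun w => Hv v x w) (Hvu v x u) u) ∧
      (∀ v x u, HasDerivAt (fun s => H v s u) (Hx v x u) x) ∧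
      (∀ v x u, HasDerivAt (fun s => Hx v s u) (Hxx v x u) x) ∧
      (∀ v x u, HasDerivAt (fun w => H w x u * Hv w x u) (HHvv v x u) v) ∧
      (∀ v x u, 2 * Hvu v x u + Hxx v x u - HHvv v x u = 0) := by
  obtain rfl : H = ewPotential a a' c := funext fun v => funext fun x => funext fun u => hH v x u
  refine ⟨fun _ x u => a u * x,
    fun v x u => a u * v + (a u) ^ 2 * x ^ 3 / 3 - a' u * x ^ 2 + c u,
    fun _ x u => a' u * x,
    fun _ x u => (a u) ^ 2 * x ^ 2 - 2 * a' u * x,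
    fun _ x u => a u * x * (a u * x),
    hasDerivAt_ewPotential_v a a' c,
    fun _ x u => (ha u).mul_const x,
    hasDerivAt_ewPotential_x a a' c,
    hasDerivAt_ewPotential_xx a a' c,
    fun v x u => (hasDerivAt_ewPotential_v a a' c v x u).mul_const (a u * x),
    fun _ _ _ => by ring⟩

/-- The function `H(v,x,u) = a(u)vx + (1/12)a(u)²x⁴ − (1/3)a'(u)x³ + c(u)x` satisfies
the dispersionless-KP-type equation `2H_{vu} + H_{xx} − (H·H_v)_v = 0` at every point. -/
theorem stmt_11 (a a' c : ℝ → ℝ) (ha : ∀ u, HasDerivAt a (a' u) u)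
    (ha' : Continuous a')
    (H : ℝ → ℝ → ℝ → ℝ)
    (hH : ∀ v x u, H v x u =
      a u * v * x + (1 / 12) * (a u) ^ 2 * x ^ 4 - (1 / 3) * a' u * x ^ 3 + c u * x) :
    ∃ Hv Hx Hvu Hxx HHvv : ℝ → ℝ → ℝ → ℝ,
      (∀ v x u, HasDerivAt (fun w => H w x u) (Hv v x u) v) ∧
      (∀ v x u, HasDerivAt (fun w => Hv v x w) (Hvu v x u) u) ∧
      (∀ v x u, HasDerivAt (fun s => H v s u) (Hx v x u) x) ∧
      (∀ v x u, HasDerivAt (fun s => Hx v s u) (Hxx v x u) x) ∧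
      (∀ v x u, HasDerivAt (fun w => H w x u * Hv w x u) (HHvv v x u) v) ∧
      (∀ v x u, 2 * Hvu v x u + Hxx v x u - HHvv v x u = 0) :=
  stmt_11_general a a' c ha H hH
end

section
/- On ℝ³ with coordinates (t,v,u), define the vector field X(t,v,u) = (−u, t, 1) and, for s ∈ ℝ, the map φ_s : ℝ³ → ℝ³, φ_s(t,v,u) = (t − u·s − s²/2, v + t·s − u·s²/2 − s³/6, u + s). Then: (i) φ₀ is the identity; (ii) φ_{s₁} ∘ φ_{s₂} = φ_{s₁+s₂} for all s₁, s₂ ∈ ℝ; (iii) for every p ∈ ℝ³ and s ∈ ℝ, the derivative in s satisfies (d/ds) φ_s(p) = X(φ_s(p)); and (iv) writing φ_s(t,v,u) = (t', v', u'), one has 2t' + (u')² = 2t + u², so φ_s preserves the open set U = {(t,v,u) : 2t + u² > 0}. -/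
/-!
Every component of `φ_s` is a polynomial in `s`, so the group law, `φ₀ = id` and the flow
equation are identities between polynomials. The quantity `2t + u²` is conserved since its
derivative along `X = (−u, t, 1)` is `2·(−u) + 2u·1 = 0`; hence `φ_s` preserves `U`.
-/

noncomputable section

/-- The vector field `X = ∂_u + t ∂_v − u ∂_t` in the coordinates `(t, v, u)`. -/
def symmetryField (p : ℝ × ℝ × ℝ) : ℝ × ℝ × ℝ := (-p.2.2, p.1, 1)

def symmetryFlow (s : ℝ) (p : ℝ × ℝ × ℝ) : ℝ × ℝ × ℝ :=
  (p.1 - p.2.2 * s - s ^ 2 / 2, p.2.1 + p.1 * s - p.2.2 * s ^ 2 / 2 - s ^ 3 / 6, p.2.2 + s)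

def flowInvariant (p : ℝ × ℝ × ℝ) : ℝ := 2 * p.1 + p.2.2 ^ 2

theorem symmetryFlow_zero : symmetryFlow 0 = id := by
  funext p
  simp [symmetryFlow]

theorem symmetryFlow_comp (s₁ s₂ : ℝ) :
    symmetryFlow s₁ ∘ symmetryFlow s₂ = symmetryFlow (s₁ + s₂) := by
  funext p
  simp only [Function.comp_apply, symmetryFlow, Prod.mk.injEq]
  refine ⟨?_, ?_, ?_⟩ <;> ring

theorem hasDerivAt_symmetryFlow (p : ℝ × ℝ × ℝ) (s : ℝ) :
    HasDerivAt (fun s' => symmetryFlow s' p) (symmetryField (symmetryFlow s p)) s := by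
  obtain ⟨t, v, u⟩ := p
  have ht : HasDerivAt (fun s' => t - u * s' - s' ^ 2 / 2) (-(u + s)) s :=
    ((((hasDerivAt_id s).const_mul u).const_sub t).sub
      ((hasDerivAt_pow 2 s).div_const 2)).congr_deriv
      (by simp only [mul_one, Nat.cast_ofNat, Nat.add_one_sub_one, pow_one]; ring)
  have hv : HasDerivAt (fun s' => v + t * s' - u * s' ^ 2 / 2 - s' ^ 3 / 6)
      (t - u * s - s ^ 2 / 2) s :=
    (((((hasDerivAt_id s).const_mul t).const_add v).sub
      (((hasDerivAt_pow 2 s).const_mul u).div_const 2)).sub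
      ((hasDerivAt_pow 3 s).div_const 6)).congr_deriv
      (by simp only [mul_one, Nat.cast_ofNat, Nat.add_one_sub_one, pow_one]; ring)
  have hu : HasDerivAt (fun s' => u + s') 1 s := (hasDerivAt_id s).const_add u
  exact ht.prodMk (hv.prodMk hu)

theorem flowInvariant_symmetryFlow (s : ℝ) (p : ℝ × ℝ × ℝ) :
    flowInvariant (symmetryFlow s p) = flowInvariant p := by
  simp only [flowInvariant, symmetryFlow]
  ring

theorem mapsTo_symmetryFlow (s : ℝ) :
    Set.MapsTo (symmetryFlow s) {p | 0 < flowInvariant p} {p | 0 < flowInvariant p} :=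
  fun p hp => by
    simpa only [Set.mem_ofPred_eq, flowInvariant_symmetryFlow] using hp

end

/-- The flow `φ_s` of the vector field `X = (−u, t, 1)` on `ℝ³` (coordinates `(t,v,u)`):
`φ₀ = id`, `φ_{s₁} ∘ φ_{s₂} = φ_{s₁+s₂}`, `(d/ds)φ_s(p) = X(φ_s(p))`, and `φ_s` preserves
the quantity `2t + u²`, hence the open set `U = {2t + u² > 0}`. -/
theorem stmt_12
    (X : ℝ × ℝ × ℝ → ℝ × ℝ × ℝ) (hX : ∀ p, X p = (-p.2.2, p.1, 1))
    (φ : ℝ → ℝ × ℝ × ℝ → ℝ × ℝ × ℝ)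
    (hφ : ∀ s t v u, φ s (t, v, u) =
      (t - u * s - s ^ 2 / 2, v + t * s - u * s ^ 2 / 2 - s ^ 3 / 6, u + s)) :
    (φ 0 = id) ∧
    (∀ s₁ s₂, φ s₁ ∘ φ s₂ = φ (s₁ + s₂)) ∧
    (∀ p s, HasDerivAt (fun s' => φ s' p) (X (φ s p)) s) ∧
    (∀ s t v u, 2 * (φ s (t, v, u)).1 + ((φ s (t, v, u)).2.2) ^ 2 = 2 * t + u ^ 2) ∧
    (∀ s, Set.MapsTo (φ s) {p : ℝ × ℝ × ℝ | 0 < 2 * p.1 + p.2.2 ^ 2}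
        {p : ℝ × ℝ × ℝ | 0 < 2 * p.1 + p.2.2 ^ 2}) := by
  obtain rfl : φ = symmetryFlow := by
    funext s ⟨t, v, u⟩
    exact hφ s t v u
  obtain rfl : X = symmetryField := funext hX
  exact ⟨symmetryFlow_zero, symmetryFlow_comp, hasDerivAt_symmetryFlow,
    fun s t v u => flowInvariant_symmetryFlow s (t, v, u), mapsTo_symmetryFlow⟩
end

section
/- Let m ≥ 0 be a natural number. The map Φ : (0,∞) × ℝ × ℝ^m × ℝ → ℝ × ℝ × ℝ^m × ℝ defined by Φ(r, w, y, s) = (r²·(1 − s²/2), r³·(w + s − s³/6), r²·y, r·s) is injective, and its image is exactly the set U = {(t, v, x, u) ∈ ℝ × ℝ × ℝ^m × ℝ : 2t + u² > 0}; i.e. Φ is a bijection from (0,∞) × ℝ × ℝ^m × ℝ onto U. -/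
/-!
The quantity `2t + u²` equals `2r²` on the image of `Φ(r, w, y, s)`, so `r = √((2t + u²)/2)` is
recovered from the image point; then `s = u / r`, `y = x / r²` and `w = v / r³ - s + s³ / 6` are
forced, which gives an explicit inverse on `U = {2t + u² > 0}`.
-/

open Set

namespace OrbitMap

variable {E : Type*} [AddCommGroup E] [Module ℝ E]

noncomputable def orbitMap : ℝ × ℝ × E × ℝ → ℝ × ℝ × E × ℝ
  | (r, w, y, s) => (r ^ 2 * (1 - s ^ 2 / 2), r ^ 3 * (w + s - s ^ 3 / 6), r ^ 2 • y, r * s)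

noncomputable def orbitMapInv : ℝ × ℝ × E × ℝ → ℝ × ℝ × E × ℝ
  | (t, v, x, u) =>
    let r := √((2 * t + u ^ 2) / 2)
    (r, v / r ^ 3 - u / r + (u / r) ^ 3 / 6, (r ^ 2)⁻¹ • x, u / r)

theorem two_mul_fst_add_sq_orbitMap (p : ℝ × ℝ × E × ℝ) :
    2 * (orbitMap p).1 + (orbitMap p).2.2.2 ^ 2 = 2 * p.1 ^ 2 := by
  obtain ⟨r, w, y, s⟩ := p
  simp only [orbitMap]
  ring

theorem orbitMapInv_orbitMap {p : ℝ × ℝ × E × ℝ} (hp : 0 < p.1) :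
    orbitMapInv (orbitMap p) = p := by
  have hr : √((2 * (orbitMap p).1 + (orbitMap p).2.2.2 ^ 2) / 2) = p.1 := by
    rw [two_mul_fst_add_sq_orbitMap, mul_div_cancel_left₀ _ two_ne_zero, Real.sqrt_sq hp.le]
  obtain ⟨r, w, y, s⟩ := p
  simp only [orbitMap] at hr hp ⊢
  simp only [orbitMapInv, hr, smul_smul, inv_mul_cancel₀ (pow_ne_zero 2 hp.ne'), one_smul,
    Prod.mk.injEq]
  refine ⟨trivial, ?_, trivial, ?_⟩
  · field_simp
    ring
  · field_simp

theorem orbitMap_orbitMapInv {q : ℝ × ℝ × E × ℝ} (hq : 0 < 2 * q.1 + q.2.2.2 ^ 2) :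
    orbitMap (orbitMapInv q) = q := by
  obtain ⟨t, v, x, u⟩ := q
  set r := √((2 * t + u ^ 2) / 2) with hr_def
  have hr : 0 < r := Real.sqrt_pos.mpr (by simpa using hq)
  have hr2 : r ^ 2 = (2 * t + u ^ 2) / 2 := Real.sq_sqrt (by simp at hq; linarith)
  simp only [orbitMapInv, orbitMap, ← hr_def, smul_smul, mul_inv_cancel₀ (pow_ne_zero 2 hr.ne'),
    one_smul, Prod.mk.injEq]
  refine ⟨?_, ?_, trivial, ?_⟩ <;> field_simp
  · linarith
  · ring

theorem bijOn_orbitMap :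
    BijOn (orbitMap (E := E)) {p | 0 < p.1} {q | 0 < 2 * q.1 + q.2.2.2 ^ 2} := by
  refine InvOn.bijOn (f' := orbitMapInv) ⟨fun p hp ↦ orbitMapInv_orbitMap hp,
    fun q hq ↦ orbitMap_orbitMapInv hq⟩ (fun p hp ↦ ?_) (fun q hq ↦ ?_)
  · simp only [mem_ofPred_eq, two_mul_fst_add_sq_orbitMap] at hp ⊢
    positivity
  · exact Real.sqrt_pos.mpr (by simpa using hq)

end OrbitMap

open OrbitMap in
/-- The map `Φ(r,w,y,s) = (r²(1 − s²/2), r³(w + s − s³/6), r²y, rs)` is a bijection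
from `(0,∞) × ℝ × ℝ^m × ℝ` onto `U = {(t,v,x,u) | 2t + u² > 0}`. -/
theorem stmt_14 (m : ℕ)
    (Φ : (ℝ × ℝ × (Fin m → ℝ) × ℝ) → (ℝ × ℝ × (Fin m → ℝ) × ℝ))
    (hΦ : ∀ (r w : ℝ) (y : Fin m → ℝ) (s : ℝ), Φ (r, w, y, s) =
      (r ^ 2 * (1 - s ^ 2 / 2), r ^ 3 * (w + s - s ^ 3 / 6), r ^ 2 • y, r * s)) :
    Set.InjOn Φ {p : ℝ × ℝ × (Fin m → ℝ) × ℝ | 0 < p.1} ∧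
    Φ '' {p : ℝ × ℝ × (Fin m → ℝ) × ℝ | 0 < p.1}
      = {q : ℝ × ℝ × (Fin m → ℝ) × ℝ | 0 < 2 * q.1 + q.2.2.2 ^ 2} := by
  obtain rfl : Φ = orbitMap := funext fun ⟨r, w, y, s⟩ ↦ hΦ r w y s
  exact ⟨bijOn_orbitMap.injOn, bijOn_orbitMap.image_eq⟩
end

section
/- On ℝ⁴ with coordinates (t, v, x, u), define the vector fields Z₁(t,v,x,u) = (1,0,0,0), Z₂(t,v,x,u) = (2t, 6v, 3x, 0), Z₃(t,v,x,u) = (0,0,0,1), Z₄(t,v,x,u) = (0, 0, x, 2u), Z₅(t,v,x,u) = (0, −x²/2, u·x, u²), and define the Lie bracket of vector fields V, W : ℝ⁴ → ℝ⁴ by [V,W](p) = DW(p)(V(p)) − DV(p)(W(p)). Then [Z₁, Z₂] = 2Z₁, [Z₃, Z₄] = 2Z₃, [Z₃, Z₅] = Z₄, [Z₄, Z₅] = 2Z₅, and [Zᵢ, Zⱼ] = 0 for every i ∈ {1,2} and j ∈ {3,4,5}. In particular Z₁, Z₂ span a Lie algebra isomorphic to aff₁(ℝ), Z₃, Z₄,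 Z₅ span a Lie algebra isomorphic to sl₂(ℝ), and the five fields span their direct sum. -/
/-!
`Z₁`, `Z₃` are constant fields and `Z₂`, `Z₄` are diagonal linear fields, so their derivatives
are `0` and the fields themselves; `Z₅` is quadratic and its derivative is computed once. Each
bracket `[V, W](p) = DW(p)(V(p)) − DV(p)(W(p))` is then a polynomial identity in `p`.
-/

/-- The Lie bracket of vector fields on `ℝ⁴`:
`[V,W](p) = DW(p)(V(p)) − DV(p)(W(p))`. -/
noncomputable def lieBracket (V W : ℝ × ℝ × ℝ × ℝ → ℝ × ℝ × ℝ × ℝ)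
    (p : ℝ × ℝ × ℝ × ℝ) : ℝ × ℝ × ℝ × ℝ :=
  fderiv ℝ W p (V p) - fderiv ℝ V p (W p)

local notation "ℝ⁴" => ℝ × ℝ × ℝ × ℝ

noncomputable def diagField (a b c e : ℝ) : ℝ⁴ →L[ℝ] ℝ⁴ :=
  (a • ContinuousLinearMap.id ℝ ℝ).prodMap ((b • ContinuousLinearMap.id ℝ ℝ).prodMap
    ((c • ContinuousLinearMap.id ℝ ℝ).prodMap (e • ContinuousLinearMap.id ℝ ℝ)))

lemma diagField_apply (a b c e : ℝ) (p : ℝ⁴) :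
    diagField a b c e p = (a * p.1, b * p.2.1, c * p.2.2.1, e * p.2.2.2) :=
  rfl

noncomputable def quadField (p : ℝ⁴) : ℝ⁴ :=
  (0, -p.2.2.1 ^ 2 / 2, p.2.2.2 * p.2.2.1, p.2.2.2 ^ 2)

lemma fderiv_quadField_apply (p d : ℝ⁴) : fderiv ℝ quadField p d =
    (0, -(p.2.2.1 * d.2.2.1), p.2.2.2 * d.2.2.1 + p.2.2.1 * d.2.2.2, 2 * p.2.2.2 * d.2.2.2) := by
  have hx := (hasFDerivAt_snd (𝕜 := ℝ) (p := p)).snd.fst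
  have hu := (hasFDerivAt_snd (𝕜 := ℝ) (p := p)).snd.snd
  have h : HasFDerivAt quadField _ p :=
    ((hasFDerivAt_const (0 : ℝ) p).prodMk (((hx.pow 2).mul_const (-1 / 2)).prodMk
      ((hu.mul hx).prodMk (hu.pow 2)))).congr_of_eventuallyEq
      (.of_forall fun q => by simp only [quadField, Pi.mul_apply]; ring_nf)
  rw [h.fderiv]
  simp only [ContinuousLinearMap.prod_apply, zero_apply, smul_apply, add_apply,
    ContinuousLinearMap.comp_apply, ContinuousLinearMap.coe_fst', ContinuousLinearMap.coe_snd', smul_eq_mul, nsmul_eq_mul,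
    Nat.cast_ofNat, Nat.add_one_sub_one, pow_one, Prod.mk.injEq, true_and, and_true]
  ring

/-- Bracket relations of the vector fields `Z₁ = ∂_t`, `Z₂ = 2t∂_t + 6v∂_v + 3x∂_x`,
`Z₃ = ∂_u`, `Z₄ = x∂_x + 2u∂_u`, `Z₅ = −(x²/2)∂_v + ux∂_x + u²∂_u` on `ℝ⁴` with
coordinates `(t,v,x,u)`: `[Z₁,Z₂] = 2Z₁`, `[Z₃,Z₄] = 2Z₃`, `[Z₃,Z₅] = Z₄`,
`[Z₄,Z₅] = 2Z₅`, and `[Zᵢ,Zⱼ] = 0` for `i ∈ {1,2}`, `j ∈ {3,4,5}`; i.e. `Z₁, Z₂`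
span a copy of `aff₁(ℝ)`, `Z₃, Z₄, Z₅` a copy of `sl₂(ℝ)`, and the five fields span
their direct sum. -/
theorem stmt_16
    (Z₁ Z₂ Z₃ Z₄ Z₅ : ℝ × ℝ × ℝ × ℝ → ℝ × ℝ × ℝ × ℝ)
    (hZ₁ : ∀ p, Z₁ p = (1, 0, 0, 0))
    (hZ₂ : ∀ p, Z₂ p = (2 * p.1, 6 * p.2.1, 3 * p.2.2.1, 0))
    (hZ₃ : ∀ p, Z₃ p = (0, 0, 0, 1))
    (hZ₄ : ∀ p, Z₄ p = (0, 0, p.2.2.1, 2 * p.2.2.2))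
    (hZ₅ : ∀ p, Z₅ p = (0, -p.2.2.1 ^ 2 / 2, p.2.2.2 * p.2.2.1, p.2.2.2 ^ 2)) :
    (∀ p, lieBracket Z₁ Z₂ p = (2 : ℝ) • Z₁ p) ∧
    (∀ p, lieBracket Z₃ Z₄ p = (2 : ℝ) • Z₃ p) ∧
    (∀ p, lieBracket Z₃ Z₅ p = Z₄ p) ∧
    (∀ p, lieBracket Z₄ Z₅ p = (2 : ℝ) • Z₅ p) ∧
    (∀ p, lieBracket Z₁ Z₃ p = 0) ∧
    (∀ p, lieBracket Z₁ Z₄ p = 0) ∧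
    (∀ p, lieBracket Z₁ Z₅ p = 0) ∧
    (∀ p, lieBracket Z₂ Z₃ p = 0) ∧
    (∀ p, lieBracket Z₂ Z₄ p = 0) ∧
    (∀ p, lieBracket Z₂ Z₅ p = 0) := by
  obtain rfl : Z₁ = fun _ => (1, 0, 0, 0) := funext hZ₁
  obtain rfl : Z₂ = diagField 2 6 3 0 := funext fun p => by simp [hZ₂, diagField_apply]
  obtain rfl : Z₃ = fun _ => (0, 0, 0, 1) := funext hZ₃
  obtain rfl : Z₄ = diagField 0 0 1 2 := funext fun p => by simp [hZ₄, diagField_apply]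
  obtain rfl : Z₅ = quadField := funext hZ₅
  refine ⟨?_, ?_, ?_, ?_, ?_, ?_, ?_, ?_, ?_, ?_⟩ <;> intro p <;>
    simp only [lieBracket, fderiv_const_apply, ContinuousLinearMap.fderiv, fderiv_quadField_apply,
      diagField_apply, quadField, zero_apply] <;>
    ext <;> simp only [Prod.fst_sub, Prod.snd_sub, Prod.smul_fst, Prod.smul_snd, Prod.fst_zero,
      Prod.snd_zero, smul_eq_mul] <;> ring
end

section
/- Let ψ : ℝ → ℝ be twice continuously differentiable with ψ'(t) > 0 for all t, and let Ω = {(t, v, x, u) ∈ ℝ⁴ : u + ψ(t) ≠ 0}. Define on Ω the function E(t,u) = ψ'(t)/(u + ψ(t))², the symmetric matrix-valued function g with components (in coordinates ordered (t,v,x,u)) g_{tt} = 1, g_{vu} = g_{uv} = E, g_{xx} = E and all other components zero, and the covector field ω with components ω_t = ψ'(t)/(u + ψ(t)) − ψ''(t)/(2ψ'(t)) and ω_v = ω_x = ω_u = 0. For a vector field Y = (Y^t, Y^v, Y^x, Y^u) on ℝ⁴ define (L_Y g)_{ij} = Σ_k (Y^k ∂_k g_{ij} + g_{kj} ∂_i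 Y^k + g_{ik} ∂_j Y^k) and (L_Y ω)_i = Σ_k (Y^k ∂_k ω_i + ω_k ∂_i Y^k). Then for each of the three vector fields Y = (0,1,0,0), Y = (0,0,1,0) and Y(t,v,x,u) = (0, x, −u, 0), one has (L_Y g)_{ij} = 0 and (L_Y ω)_i = 0 identically on Ω for all indices i, j. -/
/-- Directional (partial) derivative of a function on `ℝ⁴` along the vector `v`. -/
noncomputable def pd (v : ℝ × ℝ × ℝ × ℝ) (f : ℝ × ℝ × ℝ × ℝ → ℝ)
    (p : ℝ × ℝ × ℝ × ℝ) : ℝ :=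
  deriv (fun s : ℝ => f (p + s • v)) 0

/-- The coordinate vector fields `∂_t, ∂_v, ∂_x, ∂_u` on `ℝ⁴` with coordinates
ordered `(t,v,x,u)`. -/
noncomputable def e4 : Fin 4 → ℝ × ℝ × ℝ × ℝ :=
  ![(1, 0, 0, 0), (0, 1, 0, 0), (0, 0, 1, 0), (0, 0, 0, 1)]

/-- The coordinate Lie derivative of a symmetric 2-tensor `g` along a vector field `Y`:
`(L_Y g)_{ij} = Σ_k (Y^k ∂_k g_{ij} + g_{kj} ∂_i Y^k + g_{ik} ∂_j Y^k)`. -/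
noncomputable def lieDerivG (Y : ℝ × ℝ × ℝ × ℝ → Fin 4 → ℝ)
    (g : ℝ × ℝ × ℝ × ℝ → Fin 4 → Fin 4 → ℝ) (p : ℝ × ℝ × ℝ × ℝ) (i j : Fin 4) : ℝ :=
  ∑ k : Fin 4, (Y p k * pd (e4 k) (fun q => g q i j) p
    + g p k j * pd (e4 i) (fun q => Y q k) p
    + g p i k * pd (e4 j) (fun q => Y q k) p)

/-- The coordinate Lie derivative of a 1-form `ω` along a vector field `Y`:
`(L_Y ω)_i = Σ_k (Y^k ∂_k ω_i + ω_k ∂_i Y^k)`. -/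
noncomputable def lieDerivOmega (Y : ℝ × ℝ × ℝ × ℝ → Fin 4 → ℝ)
    (ω : ℝ × ℝ × ℝ × ℝ → Fin 4 → ℝ) (p : ℝ × ℝ × ℝ × ℝ) (i : Fin 4) : ℝ :=
  ∑ k : Fin 4, (Y p k * pd (e4 k) (fun q => ω q i) p
    + ω p k * pd (e4 i) (fun q => Y q k) p)

/-!
The metric and the 1-form depend only on `t` and `u`, while all three vector fields have
vanishing `t`- and `u`-components, so the transport term `Y^k ∂_k` drops out of both Lie
derivatives. For the constant fields `∂_v`, `∂_x` nothing else is left. For the linear field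
`x∂_v − u∂_x` what remains of `L_Y g` is the algebraic condition that its constant Jacobian is
skew-adjoint for `2 du dv + dx²`, which holds whatever the conformal factor `E`; and `L_Y ω`
only sees `∂_i Y^t = 0`.
-/

local notation "ℝ⁴" => ℝ × ℝ × ℝ × ℝ

lemma pd_eq_of_forall_eq_add_mul {v p : ℝ⁴} {f : ℝ⁴ → ℝ} {a c : ℝ}
    (h : ∀ s : ℝ, f (p + s • v) = a + s * c) : pd v f p = c := by
  unfold pd
  rw [funext h]
  simp

lemma pd_eq_zero_of_forall_eq {v p : ℝ⁴} {f : ℝ⁴ → ℝ}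
    (h : ∀ s : ℝ, f (p + s • v) = f p) : pd v f p = 0 :=
  pd_eq_of_forall_eq_add_mul (a := f p) fun s => by simp [h]

lemma pd_const (v p : ℝ⁴) (c : ℝ) : pd v (fun _ => c) p = 0 :=
  pd_eq_zero_of_forall_eq fun _ => rfl

def DependsOnlyOnTU (f : ℝ⁴ → ℝ) : Prop :=
  ∃ F : ℝ → ℝ → ℝ, ∀ q, f q = F q.1 q.2.2.2

lemma DependsOnlyOnTU.pd_eq_zero {f : ℝ⁴ → ℝ} (hf : DependsOnlyOnTU f) {v : ℝ⁴}
    (hvt : v.1 = 0) (hvu : v.2.2.2 = 0) (p : ℝ⁴) : pd v f p = 0 := by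
  obtain ⟨F, hF⟩ := hf
  refine pd_eq_zero_of_forall_eq fun s => ?_
  simp [hF, hvt, hvu]

lemma lieDerivG_eq_sum_of_dependsOnlyOnTU {Y : ℝ⁴ → Fin 4 → ℝ} {g : ℝ⁴ → Fin 4 → Fin 4 → ℝ}
    {i j : Fin 4} (hg : DependsOnlyOnTU fun q => g q i j) {p : ℝ⁴} (hYt : Y p 0 = 0)
    (hYu : Y p 3 = 0) :
    lieDerivG Y g p i j = ∑ k : Fin 4,
      (g p k j * pd (e4 i) (fun q => Y q k) p + g p i k * pd (e4 j) (fun q => Y q k) p) := by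
  have hv := hg.pd_eq_zero (v := e4 1) rfl rfl p
  have hx := hg.pd_eq_zero (v := e4 2) rfl rfl p
  simp only [lieDerivG, Fin.sum_univ_four, hYt, hYu, hv, hx]
  ring

lemma lieDerivG_eq_zero_of_const {Y : ℝ⁴ → Fin 4 → ℝ} {c : Fin 4 → ℝ} (hY : ∀ q, Y q = c)
    (hct : c 0 = 0) (hcu : c 3 = 0) {g : ℝ⁴ → Fin 4 → Fin 4 → ℝ} {i j : Fin 4}
    (hg : DependsOnlyOnTU fun q => g q i j) (p : ℝ⁴) : lieDerivG Y g p i j = 0 := by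
  rw [lieDerivG_eq_sum_of_dependsOnlyOnTU hg (by rw [hY, hct]) (by rw [hY, hcu])]
  simp [hY, pd_const]

lemma lieDerivOmega_eq_zero {Y ω : ℝ⁴ → Fin 4 → ℝ} {p : ℝ⁴} {i : Fin 4}
    (hω : DependsOnlyOnTU fun q => ω q i) (hω_ne : ∀ k, k ≠ 0 → ω p k = 0)
    (hYt : ∀ q, Y q 0 = 0) (hYu : Y p 3 = 0) : lieDerivOmega Y ω p i = 0 := by
  have hv := hω.pd_eq_zero (v := e4 1) rfl rfl p
  have hx := hω.pd_eq_zero (v := e4 2) rfl rfl p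
  simp [lieDerivOmega, Fin.sum_univ_four, hYt, hYu, hv, hx, pd_const, hω_ne]

/-- The metric `dt² + E (2 du dv + dx²)` in the coordinates `(t, v, x, u)`. -/
def canonicalMetric (E : ℝ⁴ → ℝ) (q : ℝ⁴) : Fin 4 → Fin 4 → ℝ :=
  ![![1, 0, 0, 0], ![0, 0, 0, E q], ![0, 0, E q, 0], ![0, E q, 0, 0]]

lemma dependsOnlyOnTU_canonicalMetric {E : ℝ⁴ → ℝ} (hE : DependsOnlyOnTU E) (i j : Fin 4) :
    DependsOnlyOnTU fun q => canonicalMetric E q i j := by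
  obtain ⟨F, hF⟩ := hE
  exact ⟨fun t u => canonicalMetric (fun _ => F t u) 0 i j, fun q => by
    simp only [canonicalMetric, hF]⟩

/-- The field `x∂_v − u∂_x`. -/
def nullRotation (q : ℝ⁴) : Fin 4 → ℝ :=
  ![0, q.2.2.1, -q.2.2.2, 0]

lemma pd_nullRotation (v p : ℝ⁴) (k : Fin 4) :
    pd v (fun q => nullRotation q k) p = nullRotation v k := by
  refine pd_eq_of_forall_eq_add_mul (a := nullRotation p k) fun s => ?_
  fin_cases k <;> simp [nullRotation]
  ring

lemma lieDerivG_nullRotation_canonicalMetric {E : ℝ⁴ → ℝ} (hE : DependsOnlyOnTU E)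
    (p : ℝ⁴) (i j : Fin 4) : lieDerivG nullRotation (canonicalMetric E) p i j = 0 := by
  rw [lieDerivG_eq_sum_of_dependsOnlyOnTU (dependsOnlyOnTU_canonicalMetric hE i j) rfl rfl]
  simp only [pd_nullRotation]
  fin_cases i <;> fin_cases j <;> simp [canonicalMetric, nullRotation, e4, Fin.sum_univ_four]

theorem stmt_19_general (ψ ψd ψdd : ℝ → ℝ)
    (Ω : Set (ℝ × ℝ × ℝ × ℝ))
    (E : ℝ × ℝ × ℝ × ℝ → ℝ) (hE : ∀ p, E p = ψd p.1 / (p.2.2.2 + ψ p.1) ^ 2)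
    (g : ℝ × ℝ × ℝ × ℝ → Fin 4 → Fin 4 → ℝ)
    (hg : ∀ p, g p = ![![(1 : ℝ), 0, 0, 0], ![0, 0, 0, E p], ![0, 0, E p, 0],
      ![0, E p, 0, 0]])
    (ω : ℝ × ℝ × ℝ × ℝ → Fin 4 → ℝ)
    (hω : ∀ p, ω p = ![ψd p.1 / (p.2.2.2 + ψ p.1) - ψdd p.1 / (2 * ψd p.1), 0, 0, 0])
    (Y₁ Y₂ Y₃ : ℝ × ℝ × ℝ × ℝ → Fin 4 → ℝ)
    (hY₁ : ∀ p, Y₁ p = ![0, 1, 0, 0])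
    (hY₂ : ∀ p, Y₂ p = ![0, 0, 1, 0])
    (hY₃ : ∀ p, Y₃ p = ![0, p.2.2.1, -p.2.2.2, 0]) :
    ∀ p ∈ Ω, ∀ i j : Fin 4,
      lieDerivG Y₁ g p i j = 0 ∧ lieDerivG Y₂ g p i j = 0 ∧ lieDerivG Y₃ g p i j = 0 ∧
      lieDerivOmega Y₁ ω p i = 0 ∧ lieDerivOmega Y₂ ω p i = 0 ∧
      lieDerivOmega Y₃ ω p i = 0 := by
  intro p _ i j
  obtain rfl : g = canonicalMetric E := funext hg
  obtain rfl : Y₃ = nullRotation := funext hY₃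
  have hE_tu : DependsOnlyOnTU E := ⟨fun t u => ψd t / (u + ψ t) ^ 2, hE⟩
  have hω_tu : DependsOnlyOnTU fun q => ω q i :=
    ⟨fun t u => ![ψd t / (u + ψ t) - ψdd t / (2 * ψd t), 0, 0, 0] i, fun q => congrFun (hω q) i⟩
  have hω_ne : ∀ k, k ≠ 0 → ω p k = 0 := by
    intro k hk
    fin_cases k <;> simp_all
  have hg_tu := dependsOnlyOnTU_canonicalMetric hE_tu i j
  exact ⟨lieDerivG_eq_zero_of_const hY₁ rfl rfl hg_tu p,
    lieDerivG_eq_zero_of_const hY₂ rfl rfl hg_tu p,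
    lieDerivG_nullRotation_canonicalMetric hE_tu p i j,
    lieDerivOmega_eq_zero hω_tu hω_ne (by simp [hY₁]) (by simp [hY₁]),
    lieDerivOmega_eq_zero hω_tu hω_ne (by simp [hY₂]) (by simp [hY₂]),
    lieDerivOmega_eq_zero hω_tu hω_ne (fun _ => rfl) rfl⟩

/-- For the canonical metric `h = dt² + E·(2dudv + dx²)`, `E = ψ'(t)/(u+ψ(t))²`, and the
1-form `ω_h = (ψ'(t)/(u+ψ(t)) − ψ''(t)/(2ψ'(t)))dt` of the local normal form of a
non-closed recurrent Lorentzian Weyl structure, the vector fields `∂_v`, `∂_x` and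
`x∂_v − u∂_x` are Killing fields of `h` acting trivially on `ω_h`, on the domain
`Ω = {u + ψ(t) ≠ 0}`. -/
theorem stmt_19 (ψ ψd ψdd : ℝ → ℝ)
    (hψ : ∀ t, HasDerivAt ψ (ψd t) t) (hψd : ∀ t, HasDerivAt ψd (ψdd t) t)
    (hψdd : Continuous ψdd) (hpos : ∀ t, 0 < ψd t)
    (Ω : Set (ℝ × ℝ × ℝ × ℝ)) (hΩ : Ω = {p | p.2.2.2 + ψ p.1 ≠ 0})
    (E : ℝ × ℝ × ℝ × ℝ → ℝ) (hE : ∀ p, E p = ψd p.1 / (p.2.2.2 + ψ p.1) ^ 2)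
    (g : ℝ × ℝ × ℝ × ℝ → Fin 4 → Fin 4 → ℝ)
    (hg : ∀ p, g p = ![![(1 : ℝ), 0, 0, 0], ![0, 0, 0, E p], ![0, 0, E p, 0],
      ![0, E p, 0, 0]])
    (ω : ℝ × ℝ × ℝ × ℝ → Fin 4 → ℝ)
    (hω : ∀ p, ω p = ![ψd p.1 / (p.2.2.2 + ψ p.1) - ψdd p.1 / (2 * ψd p.1), 0, 0, 0])
    (Y₁ Y₂ Y₃ : ℝ × ℝ × ℝ × ℝ → Fin 4 → ℝ)
    (hY₁ : ∀ p, Y₁ p = ![0, 1, 0, 0])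
    (hY₂ : ∀ p, Y₂ p = ![0, 0, 1, 0])
    (hY₃ : ∀ p, Y₃ p = ![0, p.2.2.1, -p.2.2.2, 0]) :
    ∀ p ∈ Ω, ∀ i j : Fin 4,
      lieDerivG Y₁ g p i j = 0 ∧ lieDerivG Y₂ g p i j = 0 ∧ lieDerivG Y₃ g p i j = 0 ∧
      lieDerivOmega Y₁ ω p i = 0 ∧ lieDerivOmega Y₂ ω p i = 0 ∧
      lieDerivOmega Y₃ ω p i = 0 :=
  stmt_19_general ψ ψd ψdd Ω E hE g hg ω hω Y₁ Y₂ Y₃ hY₁ hY₂ hY₃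
end
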